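/- arXiv:2205.09527 — 3 statements merged into one kernel-verified Lean document; each statement's English description precedes it below -/
import Mathlib

section
/- Let x = [x_0 : ⋯ : x_n] ∈ ℙ(w)(K) be a point of weighted projective space over a number field K, and define the scaling ideal I_w(x) = ∏_{v finite} p_v^{min_i ⌊v(x_i)/w_i⌋}. Then the inverse fractional ideal satisfies I_w(x)^{-1} = {a ∈ K : a^{w_i} x_i ∈ O_K for all i}. -/
/-
Write `M v = min_i ⌊v(x_i)/w_i⌋` for the exponent of `I` at `v`. Then `a ∈ I⁻¹` iff
`v(a) + M v ≥ 0` for every finite place `v`: one direction is additivity of valuations, the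
other tests `a` against an element `b ∈ I` with `v(b) = M v` exactly, which exists by prime
avoidance since `M` has finite support. Finally `v(a) + ⌊v(x_i)/w_i⌋ ≥ 0` iff
`w_i v(a) + v(x_i) = v(a^{w_i} x_i) ≥ 0`, and an element of `K` is integral iff all its
valuations are nonnegative.
-/

open NumberField IsDedekindDomain

/-- The additive normalized valuation at a finite place `v` of a number field `K`
(junk value `0` at `x = 0`). -/
noncomputable def addVal {K : Type*} [Field K] [NumberField K]
    (v : HeightOneSpectrum (𝓞 K)) (x : K) : ℤ :=
  if h : (v.valuation K x : WithZero (Multiplicative ℤ)) = 0 then 0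
  else -Multiplicative.toAdd (WithZero.unzero h)

open WithZero HeightOneSpectrum

section

variable {K : Type*} [Field K] [NumberField K]

section addVal

variable (v : HeightOneSpectrum (𝓞 K))

lemma addVal_eq_neg_log (x : K) : addVal v x = -log (v.valuation K x) := by
  unfold addVal
  split_ifs with h
  · simp [h]
  · conv_rhs => rw [← coe_unzero h]
    rfl

@[simp]
lemma addVal_zero : addVal v (0 : K) = 0 := by
  simp [addVal_eq_neg_log]

lemma addVal_mul {a b : K} (ha : a ≠ 0) (hb : b ≠ 0) :
    addVal v (a * b) = addVal v a + addVal v b := by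
  simp only [addVal_eq_neg_log, map_mul]
  rw [log_mul, neg_add] <;> simpa

lemma addVal_pow (a : K) (k : ℕ) : addVal v (a ^ k) = k * addVal v a := by
  simp [addVal_eq_neg_log, log_pow]

lemma addVal_zpow (a : K) (k : ℤ) : addVal v (a ^ k) = k * addVal v a := by
  simp [addVal_eq_neg_log, log_zpow]

lemma le_addVal_iff {y : K} (hy : y ≠ 0) {m : ℤ} :
    m ≤ addVal v y ↔ v.valuation K y ≤ exp (-m) := by
  rw [addVal_eq_neg_log, le_neg, log_le_iff_le_exp (by simpa using hy)]

lemma addVal_nonneg_iff (y : K) : 0 ≤ addVal v y ↔ v.valuation K y ≤ 1 := by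
  rcases eq_or_ne y 0 with rfl | hy
  · simp
  · simpa using le_addVal_iff v hy (m := 0)

variable {v} in
lemma exists_algebraMap_eq_iff_forall_addVal_nonneg {y : K} :
    (∃ r : 𝓞 K, algebraMap (𝓞 K) K r = y) ↔ ∀ v : HeightOneSpectrum (𝓞 K), 0 ≤ addVal v y := by
  simp_rw [addVal_nonneg_iff]
  refine ⟨?_, mem_integers_of_valuation_le_one K y⟩
  rintro ⟨r, rfl⟩ v
  exact v.valuation_le_one r

lemma finite_addVal_ne_zero {y : K} (hy : y ≠ 0) :
    {v : HeightOneSpectrum (𝓞 K) | addVal v y ≠ 0}.Finite := by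
  refine ((Support.finite (𝓞 K) y).union (Support.finite (𝓞 K) y⁻¹)).subset fun v hv => ?_
  have h0 : v.valuation K y ≠ 0 := by simpa using hy
  contrapose! hv
  simp only [Set.mem_union, Support, Set.mem_ofPred_eq, not_or, not_lt, map_inv₀,
    inv_le_one₀ (zero_lt_iff.mpr h0)] at hv
  simp [addVal_eq_neg_log, le_antisymm hv.1 hv.2]

lemma le_addVal_algebraMap_iff {s : 𝓞 K} (hs : s ≠ 0) (N : ℕ) :
    (N : ℤ) ≤ addVal v (algebraMap (𝓞 K) K s) ↔ s ∈ v.asIdeal ^ N := by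
  rw [le_addVal_iff v (by simpa), valuation_of_algebraMap, intValuation_le_pow_iff_mem]

lemma addVal_algebraMap_eq_zero {s : 𝓞 K} (hs : s ∉ v.asIdeal) :
    addVal v (algebraMap (𝓞 K) K s) = 0 := by
  simp [addVal_eq_neg_log, valuation_of_algebraMap, intValuation_eq_one_iff.mpr hs]

end addVal

lemma IsDedekindDomain.HeightOneSpectrum.exists_notMem_forall_mem_pow {R : Type*} [CommRing R]
    [IsDedekindDomain R] {v : HeightOneSpectrum R} {T : Finset (HeightOneSpectrum R)}
    (hv : v ∉ T) (N : HeightOneSpectrum R → ℕ) :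
    ∃ s : R, s ∉ v.asIdeal ∧ ∀ v' ∈ T, s ∈ v'.asIdeal ^ N v' := by
  have hT : ¬ ∏ v' ∈ T, v'.asIdeal ^ N v' ≤ v.asIdeal := by
    rw [v.isPrime.prod_le]
    rintro ⟨v', hv'T, hle⟩
    obtain rfl : v' = v := HeightOneSpectrum.ext <|
      v'.isMaximal.eq_of_le v.isPrime.ne_top (v.isPrime.le_of_pow_le hle)
    exact hv hv'T
  obtain ⟨s, hsT, hsv⟩ := SetLike.not_le_iff_exists.mp hT
  exact ⟨s, hsv, fun v' hv' => Ideal.le_of_dvd (Finset.dvd_prod_of_mem _ hv') hsT⟩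

lemma exists_addVal_eq_and_forall_le {m : HeightOneSpectrum (𝓞 K) → ℤ}
    (hm : {v | m v ≠ 0}.Finite) (v : HeightOneSpectrum (𝓞 K)) :
    ∃ b : K, b ≠ 0 ∧ addVal v b = m v ∧ ∀ v', m v' ≤ addVal v' b := by
  -- `π ^ m v` is right at `v`; multiplying by some `s ∈ 𝓞 K` that is a unit at `v` and divisible
  -- enough at the finitely many places where `π ^ m v` is too small fixes the other places.
  obtain ⟨π, hπ⟩ := v.valuation_exists_uniformizer K
  have hπ0 : π ≠ 0 := (Valuation.ne_zero_iff _).mp (hπ ▸ exp_ne_zero)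
  have hπv : addVal v π = 1 := by simp [addVal_eq_neg_log, hπ]
  set T := {v' | addVal v' (π ^ m v) < m v'}
  have hT : T.Finite := ((finite_addVal_ne_zero hπ0).union hm).subset fun v' hv' => by
    contrapose! hv'
    simp_all [T, addVal_zpow]
  have hvT : v ∉ hT.toFinset := by simp [T, addVal_zpow, hπv]
  obtain ⟨s, hsv, hsT⟩ :=
    exists_notMem_forall_mem_pow hvT fun v' => (m v' - addVal v' (π ^ m v)).toNat
  have hs0 : algebraMap (𝓞 K) K s ≠ 0 := by
    rintro h
    exact hsv (by simp [(FaithfulSMul.algebraMap_eq_zero_iff _ _).mp h])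
  refine ⟨π ^ m v * algebraMap (𝓞 K) K s, mul_ne_zero (zpow_ne_zero _ hπ0) hs0, ?_, fun v' => ?_⟩
  · rw [addVal_mul v (zpow_ne_zero _ hπ0) hs0, addVal_zpow, hπv, addVal_algebraMap_eq_zero v hsv]
    simp
  rw [addVal_mul v' (zpow_ne_zero _ hπ0) hs0]
  by_cases hv' : v' ∈ T
  · have hs := (le_addVal_algebraMap_iff v' (by simpa using hs0) _).mpr
      (hsT v' (hT.mem_toFinset.mpr hv'))
    have := Int.self_le_toNat (m v' - addVal v' (π ^ m v))
    linarith
  · have hs := exists_algebraMap_eq_iff_forall_addVal_nonneg.mp ⟨s, rfl⟩ v'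
    simp only [T, Set.mem_ofPred_eq, not_lt] at hv'
    linarith

lemma FractionalIdeal.mem_inv_iff_forall_addVal_add_nonneg {M : HeightOneSpectrum (𝓞 K) → ℤ}
    (hM : {v | M v ≠ 0}.Finite) {I : FractionalIdeal (nonZeroDivisors (𝓞 K)) K} (hI0 : I ≠ 0)
    (hI : ∀ b : K, b ≠ 0 → (b ∈ I ↔ ∀ v, M v ≤ addVal v b)) {a : K} (ha : a ≠ 0) :
    a ∈ I⁻¹ ↔ ∀ v, 0 ≤ addVal v a + M v := by
  simp_rw [FractionalIdeal.mem_inv_iff hI0, FractionalIdeal.mem_one_iff,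
    exists_algebraMap_eq_iff_forall_addVal_nonneg]
  constructor
  · intro haI v
    obtain ⟨b, hb0, hbv, hbI⟩ := exists_addVal_eq_and_forall_le hM v
    have hab := haI b ((hI b hb0).mpr hbI) v
    rwa [addVal_mul v ha hb0, hbv] at hab
  · intro haM b hbI v
    rcases eq_or_ne b 0 with rfl | hb0
    · simp
    have hbv := (hI b hb0).mp hbI v
    rw [addVal_mul v ha hb0]
    linarith [haM v]

lemma Int.le_fdiv_iff_mul_le {a b c : ℤ} (hc : 0 < c) : a ≤ b.fdiv c ↔ a * c ≤ b := by
  rw [Int.fdiv_eq_ediv_of_nonneg _ hc.le, Int.le_ediv_iff_mul_le hc]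

section scalingExponent

variable {ι : Type*} (w : ι → ℕ) (x : ι → K) (v : HeightOneSpectrum (𝓞 K))

noncomputable def scalingExponent : ℤ :=
  sInf {m : ℤ | ∃ i, x i ≠ 0 ∧ m = Int.fdiv (addVal v (x i)) (w i)}

variable {x}

lemma le_scalingExponent_iff [Finite ι] (hx : x ≠ 0) {k : ℤ} :
    k ≤ scalingExponent w x v ↔ ∀ i, x i ≠ 0 → k ≤ Int.fdiv (addVal v (x i)) (w i) := by
  obtain ⟨i₀, hi₀⟩ := Function.ne_iff.mp hx
  have hfin : {m : ℤ | ∃ i, x i ≠ 0 ∧ m = Int.fdiv (addVal v (x i)) (w i)}.Finite :=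
    (Set.finite_range fun i => Int.fdiv (addVal v (x i)) (w i)).subset
      fun _ ⟨i, _, hm⟩ => ⟨i, hm.symm⟩
  rw [scalingExponent, le_csInf_iff hfin.bddBelow ⟨_, i₀, hi₀, rfl⟩]
  simp only [Set.mem_ofPred_eq, forall_exists_index, and_imp]
  exact ⟨fun h i hi => h _ i hi rfl, fun h _ i hi hm => hm ▸ h i hi⟩

lemma finite_scalingExponent_ne_zero [Finite ι] (hx : x ≠ 0) :
    {v : HeightOneSpectrum (𝓞 K) | scalingExponent w x v ≠ 0}.Finite := by
  obtain ⟨i₀, hi₀⟩ := Function.ne_iff.mp hx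
  refine ((Set.toFinite {i | x i ≠ 0}).biUnion fun i hi => finite_addVal_ne_zero hi).subset
    fun v hv => ?_
  contrapose! hv
  simp only [Set.mem_iUnion, Set.mem_ofPred_eq, exists_prop, not_exists, not_and, not_not] at hv ⊢
  have hle := (le_scalingExponent_iff w v hx).mp le_rfl i₀ hi₀
  rw [hv i₀ hi₀, Int.zero_fdiv] at hle
  exact le_antisymm hle ((le_scalingExponent_iff w v hx).mpr fun i hi => by simp [hv i hi])

lemma neg_addVal_le_scalingExponent_iff [Finite ι] (hw : ∀ i, 0 < w i) (hx : x ≠ 0) {a : K}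
    (ha : a ≠ 0) :
    -addVal v a ≤ scalingExponent w x v ↔ ∀ i, 0 ≤ addVal v (a ^ w i * x i) := by
  rw [le_scalingExponent_iff w v hx]
  refine forall_congr' fun i => ?_
  rcases eq_or_ne (x i) 0 with hxi | hxi
  · simp [hxi]
  rw [addVal_mul v (pow_ne_zero _ ha) hxi, addVal_pow, Int.le_fdiv_iff_mul_le (mod_cast hw i)]
  simp only [hxi, ne_eq, not_false_eq_true, forall_const]
  constructor <;> intro h <;> linarith

end scalingExponent

end

/-- The inverse of the scaling ideal: if `x = [x_0 : ⋯ : x_n] ∈ ℙ(w)(K)` and the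
fractional ideal `I = I_w(x) = ∏_v p_v^{min_i ⌊v(x_i)/w_i⌋}` (characterized by
`a ∈ I ↔ v(a) ≥ min_i ⌊v(x_i)/w_i⌋` for all finite `v`, the min being over `i` with
`x_i ≠ 0`), then `I⁻¹ = {a ∈ K : a^{w_i} x_i ∈ O_K for all i}`. -/
theorem scalingIdeal_inv {K : Type*} [Field K] [NumberField K] {n : ℕ}
    (w : Fin (n + 1) → ℕ) (hw : ∀ i, 0 < w i)
    (x : Fin (n + 1) → K) (hx : x ≠ 0)
    (I : FractionalIdeal (nonZeroDivisors (𝓞 K)) K) (hI0 : I ≠ 0)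
    (hI : ∀ a : K, a ≠ 0 →
      (a ∈ I ↔ ∀ v : HeightOneSpectrum (𝓞 K),
        sInf {m : ℤ | ∃ i, x i ≠ 0 ∧ m = Int.fdiv (addVal v (x i)) (w i)}
          ≤ addVal v a)) :
    ∀ a : K, (a ∈ I⁻¹ ↔
      ∀ i, ∃ r : 𝓞 K, algebraMap (𝓞 K) K r = a ^ (w i) * x i) := by
  intro a
  rcases eq_or_ne a 0 with rfl | ha
  · simp [zero_pow (hw _).ne', FractionalIdeal.zero_mem]
  rw [FractionalIdeal.mem_inv_iff_forall_addVal_add_nonneg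
    (finite_scalingExponent_ne_zero w hx) hI0 hI ha]
  simp_rw [exists_algebraMap_eq_iff_forall_addVal_nonneg]
  rw [forall_comm]
  refine forall_congr' fun v => ?_
  rw [← neg_addVal_le_scalingExponent_iff w v hw hx ha, neg_le_iff_add_nonneg']
end

section
/- Let Λ ⊂ ℝ^n be a full-rank lattice with successive minima λ_1 ≤ ⋯ ≤ λ_n. Then λ_1 ⋯ λ_n ≥ (2^n / (n! · vol(B_n))) · det(Λ), where B_n is the unit ball in ℝ^n. -/
/-!
Pick linearly independent lattice vectors `v i` with `‖v i‖ ≤ λ i`: this is possible greedily,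
since `i + 1` independent vectors never all lie in the span of `i` vectors. The cross-polytope
with vertices `± v i / λ i` lies in the unit ball and has volume `2ⁿ / n! · |det v| / ∏ λ i`,
while `|det v|` is the covolume of the sublattice spanned by the `v i`, hence at least `det Λ`.
-/

open MeasureTheory ZLattice Module Submodule Set Metric

section Flag

variable {K M : Type*} [DivisionRing K] [AddCommGroup M] [Module K M]

theorem exists_notMem_span_range_of_card_lt {ι κ : Type*} [Fintype ι] [Fintype κ]
    (v : κ → M) {s : ι → M} (hs : LinearIndependent K s) (hcard : Fintype.card κ < Fintype.card ι) :
    ∃ i, s i ∉ span K (range v) := by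
  by_contra! h
  set W := span K (range v)
  have : FiniteDimensional K W := .span_of_finite K (finite_range v)
  have hsW : LinearIndependent K (fun i => (⟨s i, h i⟩ : W)) :=
    LinearIndependent.of_comp W.subtype hs
  have : finrank K W ≤ Fintype.card κ := finrank_range_le_card v
  have := hsW.fintype_card_le_finrank
  omega

theorem exists_linearIndependent_forall_mem {n : ℕ} (A : Fin n → Set M)
    (hA : ∀ i : Fin n, ∃ s : Fin (i + 1) → M, LinearIndependent K s ∧ ∀ j, s j ∈ A i) :
    ∃ v : Fin n → M, LinearIndependent K v ∧ ∀ i, v i ∈ A i := by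
  induction n with
  | zero => exact ⟨Fin.elim0, linearIndependent_empty_type, fun i => i.elim0⟩
  | succ n ih =>
    obtain ⟨v, hv, hvA⟩ := ih (A ∘ Fin.castSucc) fun i => hA i.castSucc
    obtain ⟨s, hs, hsA⟩ := hA (Fin.last n)
    obtain ⟨j, hj⟩ := exists_notMem_span_range_of_card_lt v hs (by simp)
    refine ⟨Fin.snoc v (s j), linearIndependent_finSnoc.2 ⟨hv, hj⟩, Fin.lastCases ?_ ?_⟩
    · simpa using hsA j
    · simpa using hvA

end Flag

section Covolume

variable {E : Type*} [NormedAddCommGroup E] [InnerProductSpace ℝ E] [FiniteDimensional ℝ E]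
  [MeasurableSpace E] [BorelSpace E]

theorem ZLattice.covolume_le_covolume_of_le (L₁ L₂ : Submodule ℤ E)
    [DiscreteTopology L₁] [IsZLattice ℝ L₁] [DiscreteTopology L₂] [IsZLattice ℝ L₂]
    (h : L₁ ≤ L₂) : covolume L₂ ≤ covolume L₁ := by
  have hq := covolume_div_covolume_eq_relIndex' L₁ L₂ h
  have hindex : L₁.toAddSubgroup.relIndex L₂.toAddSubgroup ≠ 0 := by
    rintro h0
    rw [h0, Nat.cast_zero, div_eq_zero_iff] at hq
    exact hq.elim (covolume_ne_zero L₁ volume) (covolume_ne_zero L₂ volume)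
  have hone : (1 : ℝ) ≤ covolume L₁ / covolume L₂ := by
    rw [hq]; exact_mod_cast Nat.one_le_iff_ne_zero.2 hindex
  rwa [one_le_div (covolume_pos L₂ volume)] at hone

theorem ZLattice.covolume_span_eq_abs_det {ι : Type*} [Fintype ι] [DecidableEq ι]
    (b₀ : OrthonormalBasis ι ℝ E) (c : Basis ι ℝ E) :
    covolume (span ℤ (range c)) = |b₀.toBasis.det c| := by
  have hb₀ : volume.real (ZSpan.fundamentalDomain b₀.toBasis) = 1 := by
    rw [measureReal_congr (ZSpan.fundamentalDomain_ae_parallelepiped _ volume),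
      OrthonormalBasis.coe_toBasis, measureReal_def, b₀.volume_parallelepiped, ENNReal.toReal_one]
  rw [covolume_eq_measure_fundamentalDomain _ volume (ZSpan.isAddFundamentalDomain c volume),
    ZSpan.measureReal_fundamentalDomain c volume b₀.toBasis, hb₀, mul_one]

theorem ZLattice.covolume_le_abs_det {ι : Type*} [Fintype ι] [DecidableEq ι]
    (L : Submodule ℤ E) [DiscreteTopology L] [IsZLattice ℝ L] (b₀ : OrthonormalBasis ι ℝ E)
    {v : ι → E} (hv : LinearIndependent ℝ v) (hvL : ∀ i, v i ∈ L) :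
    covolume L ≤ |b₀.toBasis.det v| := by
  let c := basisOfLinearIndependentOfCardEqFinrank' v hv (finrank_eq_card_basis b₀.toBasis).symm
  have hc : ⇑c = v := coe_basisOfLinearIndependentOfCardEqFinrank' v hv _
  have hcL : span ℤ (range c) ≤ L := span_le.2 (by rintro _ ⟨i, rfl⟩; rw [hc]; exact hvL i)
  rw [← hc, ← covolume_span_eq_abs_det b₀ c]
  exact covolume_le_covolume_of_le _ L hcL

end Covolume

section CrossPolytope

variable {ι E : Type*} [Fintype ι]

def crossPolytope [AddCommGroup E] [Module ℝ E] (b : Basis ι ℝ E) : Set E :=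
  {x | ∑ i, |b.repr x i| < 1}

theorem image_crossPolytope_subset_ball [AddCommGroup E] [Module ℝ E] (b : Basis ι ℝ E)
    {F : Type*} [SeminormedAddCommGroup F] [NormedSpace ℝ F] {w : ι → F} (hw : ∀ i, ‖w i‖ ≤ 1) :
    b.constr ℝ w '' crossPolytope b ⊆ ball 0 1 := by
  rintro _ ⟨x, hx, rfl⟩
  rw [mem_ball_zero_iff, b.constr_apply_fintype ℝ]
  calc ‖∑ i, b.equivFun x i • w i‖ ≤ ∑ i, ‖b.equivFun x i • w i‖ := norm_sum_le _ _
    _ ≤ ∑ i, |b.repr x i| := Finset.sum_le_sum fun i _ => by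
        rw [norm_smul, Real.norm_eq_abs, b.equivFun_apply]
        exact mul_le_of_le_one_right (abs_nonneg _) (hw i)
    _ < 1 := hx

variable [NormedAddCommGroup E] [InnerProductSpace ℝ E] [FiniteDimensional ℝ E]
  [MeasurableSpace E] [BorelSpace E]

theorem volume_crossPolytope (b : OrthonormalBasis ι ℝ E) :
    volume (crossPolytope b.toBasis) =
      ENNReal.ofReal (2 ^ Fintype.card ι / (Fintype.card ι).factorial) := by
  have hmeas : MeasurableSet {x : ι → ℝ | ∑ i, |x i| < 1} :=
    measurableSet_lt (by fun_prop) measurable_const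
  have hpre : crossPolytope b.toBasis =
      b.repr ⁻¹' ((MeasurableEquiv.toLp 2 (ι → ℝ)).symm ⁻¹' {x | ∑ i, |x i| < 1}) := by
    ext; simp [crossPolytope]
  have hsum := volume_sum_rpow_lt_one ι (p := 1) le_rfl
  simp only [Real.rpow_one, div_one, one_add_one_eq_two, Real.Gamma_two, mul_one,
    Real.Gamma_nat_eq_factorial] at hsum
  rw [hpre, b.measurePreserving_repr.measure_preimage
      (hmeas.preimage (MeasurableEquiv.measurable _)).nullMeasurableSet,
    (EuclideanSpace.volume_preserving_symm_measurableEquiv_toLp ι).measure_preimage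
      hmeas.nullMeasurableSet, hsum]

theorem abs_det_mul_le_measureReal_ball [DecidableEq ι] (b : OrthonormalBasis ι ℝ E) {w : ι → E}
    (hw : ∀ i, ‖w i‖ ≤ 1) :
    |b.toBasis.det w| * (2 ^ Fintype.card ι / (Fintype.card ι).factorial) ≤
      volume.real (ball (0 : E) 1) := by
  set T := b.toBasis.constr ℝ w
  have hTb : T ∘ b.toBasis = w := funext (b.toBasis.constr_basis ℝ w)
  have hdet : LinearMap.det T = b.toBasis.det w := by
    rw [← hTb, b.toBasis.det_comp, b.toBasis.det_self, mul_one]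
  have hvol := measure_mono (μ := volume) (image_crossPolytope_subset_ball b.toBasis hw)
  rw [Measure.addHaar_image_linearMap, volume_crossPolytope, hdet, ← ENNReal.ofReal_mul
    (abs_nonneg _)] at hvol
  exact (ENNReal.ofReal_le_iff_le_toReal measure_ball_lt_top.ne).1 hvol

theorem abs_det_mul_le_prod_mul_measureReal_ball [DecidableEq ι] (b : OrthonormalBasis ι ℝ E)
    {v : ι → E} {r : ι → ℝ} (hr : ∀ i, 0 < r i) (hv : ∀ i, ‖v i‖ ≤ r i) :
    |b.toBasis.det v| * (2 ^ Fintype.card ι / (Fintype.card ι).factorial) ≤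
      (∏ i, r i) * volume.real (ball (0 : E) 1) := by
  have hw : ∀ i, ‖(r i)⁻¹ • v i‖ ≤ 1 := fun i => by
    rw [norm_smul, norm_inv, Real.norm_of_nonneg (hr i).le]
    exact inv_mul_le_one_of_le₀ (hv i) (hr i).le
  have hdet : b.toBasis.det (fun i => (r i)⁻¹ • v i) = (∏ i, r i)⁻¹ * b.toBasis.det v := by
    rw [AlternatingMap.map_smul_univ, smul_eq_mul, Finset.prod_inv_distrib]
  have hprod : 0 < ∏ i, r i := Finset.prod_pos fun i _ => hr i
  have key := abs_det_mul_le_measureReal_ball b hw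
  rw [hdet, abs_mul, abs_of_pos (inv_pos.2 hprod), mul_assoc, inv_mul_le_iff₀ hprod] at key
  exact key

end CrossPolytope

theorem minkowski_second_lower_general (n : ℕ)
    (Λ : Submodule ℤ (EuclideanSpace ℝ (Fin n)))
    [DiscreteTopology Λ] [IsZLattice ℝ Λ]
    (lam : Fin n → ℝ)
    (hlam : ∀ i : Fin n,
      IsLeast {r : ℝ | ∃ s : Fin ((i : ℕ) + 1) → Λ,
        LinearIndependent ℝ (fun j => (s j : EuclideanSpace ℝ (Fin n))) ∧
        ∀ j, ‖(s j : EuclideanSpace ℝ (Fin n))‖ ≤ r} (lam i)) :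
    (2 : ℝ) ^ n / ((n.factorial : ℝ) *
        (volume (Metric.ball (0 : EuclideanSpace ℝ (Fin n)) 1)).toReal) *
        ZLattice.covolume Λ
      ≤ ∏ i : Fin n, lam i := by
  have hlam_pos : ∀ i, 0 < lam i := fun i => by
    obtain ⟨s, hs, hsn⟩ := (hlam i).1
    exact (norm_pos_iff.2 (hs.ne_zero 0)).trans_le (hsn 0)
  obtain ⟨v, hv, hvΛ⟩ := exists_linearIndependent_forall_mem (K := ℝ)
      (fun i => {x | x ∈ Λ ∧ ‖x‖ ≤ lam i}) fun i => by
    obtain ⟨s, hs, hsn⟩ := (hlam i).1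
    exact ⟨_, hs, fun j => ⟨(s j).2, hsn j⟩⟩
  let b₀ := EuclideanSpace.basisFun (Fin n) ℝ
  have hcov := covolume_le_abs_det Λ b₀ hv fun i => (hvΛ i).1
  have hvol := abs_det_mul_le_prod_mul_measureReal_ball b₀ hlam_pos fun i => (hvΛ i).2
  rw [Fintype.card_fin] at hvol
  set V := volume.real (ball (0 : EuclideanSpace ℝ (Fin n)) 1)
  have hV : 0 < V :=
    ENNReal.toReal_pos (measure_ball_pos volume 0 one_pos).ne' measure_ball_lt_top.ne
  rw [← measureReal_def, div_mul_eq_mul_div, div_le_iff₀ (by positivity)]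
  calc (2 : ℝ) ^ n * covolume Λ ≤ 2 ^ n * |b₀.toBasis.det v| := by gcongr
    _ = |b₀.toBasis.det v| * (2 ^ n / n.factorial) * n.factorial := by field_simp
    _ ≤ (∏ i, lam i) * V * n.factorial := by gcongr
    _ = (∏ i, lam i) * (n.factorial * V) := by ring

/-- Minkowski's second theorem (lower bound): for a full-rank lattice `Λ ⊂ ℝ^n` with
successive minima `λ_1 ≤ ⋯ ≤ λ_n` (with respect to the Euclidean unit ball), one has
`λ_1 ⋯ λ_n ≥ (2^n / (n! · vol(B_n))) · det(Λ)`, where `B_n` is the unit ball and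
`det(Λ)` the covolume of `Λ`. -/
theorem minkowski_second_lower (n : ℕ) (hn : 0 < n)
    (Λ : Submodule ℤ (EuclideanSpace ℝ (Fin n)))
    [DiscreteTopology Λ] [IsZLattice ℝ Λ]
    (lam : Fin n → ℝ)
    (hlam : ∀ i : Fin n,
      IsLeast {r : ℝ | ∃ s : Fin ((i : ℕ) + 1) → Λ,
        LinearIndependent ℝ (fun j => (s j : EuclideanSpace ℝ (Fin n))) ∧
        ∀ j, ‖(s j : EuclideanSpace ℝ (Fin n))‖ ≤ r} (lam i)) :
    (2 : ℝ) ^ n / ((n.factorial : ℝ) *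
        (volume (Metric.ball (0 : EuclideanSpace ℝ (Fin n)) 1)).toReal) *
        ZLattice.covolume Λ
      ≤ ∏ i : Fin n, lam i :=
  minkowski_second_lower_general n Λ lam hlam
end

section
/- Let K be a number field with r_1 real and r_2 complex embeddings and regulator R_K, and let w = (w_0,...,w_n) be positive integer weights with |w| = ∑ w_i. Let F(1) be the fundamental domain for the w-weighted action of O_K^× on ∏_{v|∞}(K_v^{n+1} \ {0}) intersected with {Ht_{w,∞} ≤ 1}, constructed via the Dirichlet unit lattice. Then F(1) is a bounded subset of K_∞^{n+1}. -/
open NumberField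

/-- The archimedean part of the weighted height on `∏_{v|∞}(K_v^{n+1} \ {0})`:
`Ht_{w,∞}(x) = ∏_{v|∞} max_i |x_{v,i}|_v^{1/w_i}`, where `|·|_v` is the normalized
absolute value at the infinite place `v` (given by `|z|_v = |z|^{mult v}` under the
embedding `K_v ↪ ℂ`). -/
noncomputable def archHeight {K : Type*} [Field K] [NumberField K] {n : ℕ}
    (w : Fin (n + 1) → ℕ) (x : InfinitePlace K → Fin (n + 1) → ℂ) : ℝ :=
  ∏ v : InfinitePlace K,
    ⨆ i : Fin (n + 1), (‖x v i‖ ^ (v.mult : ℝ)) ^ ((1 : ℝ) / (w i))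

/-- The logarithm map `η : ∏_{v|∞}(K_v^{n+1} \ {0}) → ℝ^{r₁+r₂}`,
`η(x)_v = log max_i |x_{v,i}|_v^{1/w_i}`. -/
noncomputable def etaMap {K : Type*} [Field K] [NumberField K] {n : ℕ}
    (w : Fin (n + 1) → ℕ) (x : InfinitePlace K → Fin (n + 1) → ℂ) :
    InfinitePlace K → ℝ := fun v =>
  Real.log (⨆ i : Fin (n + 1), (‖x v i‖ ^ (v.mult : ℝ)) ^ ((1 : ℝ) / (w i)))

/-- The projection `pr : ℝ^{r₁+r₂} → H` onto the hyperplane `H = {∑ x_v = 0}` along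
the vector `(d_v)` with `d_v = mult v`: `pr(y)_v = y_v − (1/d ∑ y_{v'}) d_v`. -/
noncomputable def prMap (K : Type*) [Field K] [NumberField K]
    (y : InfinitePlace K → ℝ) : InfinitePlace K → ℝ := fun v =>
  y v - ((∑ v' : InfinitePlace K, y v') / (Module.finrank ℚ K)) * (v.mult : ℕ)

/-!
On `F(1)` the sum of the coordinates of `η(x)` is `log Ht_{w,∞}(x) ≤ 0`, so `pr` moves `η(x)`
by a nonpositive multiple of `(d_v)`; hence `η(x) ≤ pr(η(x))` coordinatewise, and the latter is
bounded above on the bounded set `F̃`. An upper bound `η(x)_v ≤ D_v` gives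
`|x_{v,i}|^{d_v} ≤ exp (D_v w_i)`, and since `d_v ≥ 1` this bounds `|x_{v,i}|`.
-/

section WeightedMax

variable {ι E : Type*} [NormedAddGroup E]

noncomputable def weightedMax (w : ι → ℕ) (m : ℝ) (z : ι → E) : ℝ :=
  ⨆ i, (‖z i‖ ^ m) ^ ((1 : ℝ) / w i)

variable [Finite ι] {w : ι → ℕ} {m : ℝ} {z : ι → E}

lemma le_weightedMax (i : ι) : (‖z i‖ ^ m) ^ ((1 : ℝ) / w i) ≤ weightedMax w m z :=
  le_ciSup (f := fun i => (‖z i‖ ^ m) ^ ((1 : ℝ) / w i)) (Set.finite_range _).bddAbove i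

lemma weightedMax_pos (hz : z ≠ 0) : 0 < weightedMax w m z := by
  obtain ⟨j, hj⟩ := Function.ne_iff.mp hz
  exact (by positivity : 0 < (‖z j‖ ^ m) ^ ((1 : ℝ) / w j)).trans_le (le_weightedMax j)

lemma Real.le_max_one_of_rpow_le {t m B : ℝ} (hm : 1 ≤ m) (h : t ^ m ≤ B) : t ≤ max 1 B := by
  rcases le_or_gt t 1 with ht | ht
  · exact le_max_of_le_left ht
  · exact le_max_of_le_right ((Real.self_le_rpow_of_one_le ht.le hm).trans h)

lemma norm_le_of_weightedMax_le {B : ℝ} {i : ι} (hw : 0 < w i) (hm : 1 ≤ m)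
    (h : weightedMax w m z ≤ B) : ‖z i‖ ≤ max 1 (B ^ w i) := by
  have hzi := (le_weightedMax (w := w) (m := m) (z := z) i).trans h
  have hB : 0 ≤ B := (by positivity : (0 : ℝ) ≤ _).trans hzi
  rw [one_div, Real.rpow_inv_le_iff_of_pos (by positivity) hB (by exact_mod_cast hw),
    Real.rpow_natCast] at hzi
  exact Real.le_max_one_of_rpow_le hm hzi

end WeightedMax

section InfinitePlace

variable {K : Type*} [Field K] [NumberField K] {n : ℕ} {w : Fin (n + 1) → ℕ}
  {x : InfinitePlace K → Fin (n + 1) → ℂ}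

lemma etaMap_eq_log_weightedMax (v : InfinitePlace K) :
    etaMap w x v = Real.log (weightedMax w v.mult (x v)) := rfl

lemma archHeight_eq_prod_weightedMax : archHeight w x = ∏ v, weightedMax w v.mult (x v) := rfl

lemma sum_etaMap_nonpos (hx : ∀ v, x v ≠ 0) (hH : archHeight w x ≤ 1) :
    ∑ v, etaMap w x v ≤ 0 := by
  simp only [etaMap_eq_log_weightedMax]
  rw [← Real.log_prod fun v _ => (weightedMax_pos (hx v)).ne', ← archHeight_eq_prod_weightedMax]
  exact Real.log_nonpos (Finset.prod_nonneg fun v _ => (weightedMax_pos (hx v)).le) hH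

lemma le_of_prMap_le {y : InfinitePlace K → ℝ} {v : InfinitePlace K} {c : ℝ}
    (hy : ∑ v', y v' ≤ 0) (h : prMap K y v ≤ c) : y v ≤ c := by
  have : (∑ v', y v') / Module.finrank ℚ K * (v.mult : ℕ) ≤ 0 :=
    mul_nonpos_of_nonpos_of_nonneg (div_nonpos_of_nonpos_of_nonneg hy (by positivity))
      (by positivity)
  unfold prMap at h
  linarith

end InfinitePlace

theorem fundamentalDomain_bounded_general {K : Type*} [Field K] [NumberField K] {n : ℕ}
    (w : Fin (n + 1) → ℕ) (hw : ∀ i, 0 < w i)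
    (Ftil : Set (InfinitePlace K → ℝ))
    (hFtilBdd : Bornology.IsBounded Ftil) :
    Bornology.IsBounded
      {x : InfinitePlace K → Fin (n + 1) → ℂ |
        (∀ v, x v ≠ 0) ∧ prMap K (etaMap w x) ∈ Ftil ∧ archHeight w x ≤ 1} := by
  obtain ⟨D, hD⟩ := hFtilBdd.bddAbove
  refine (Bornology.IsBounded.pi fun v => Bornology.IsBounded.pi fun i =>
    Metric.isBounded_closedBall (x := 0) (r := max 1 (Real.exp (D v) ^ w i))).subset ?_
  rintro x ⟨hx0, hxF, hxH⟩ v - i -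
  have hη : etaMap w x v ≤ D v := le_of_prMap_le (sum_etaMap_nonpos hx0 hxH) (hD hxF v)
  have hmax : weightedMax w v.mult (x v) ≤ Real.exp (D v) :=
    (Real.log_le_iff_le_exp (weightedMax_pos (hx0 v))).mp hη
  simpa only [Metric.mem_closedBall, dist_zero_right] using
    norm_le_of_weightedMax_le (hw i) InfinitePlace.one_le_mult hmax

/-- Boundedness of the fundamental domain `F(1)`: if `F̃` is a bounded subset of the
trace-zero hyperplane `H = {y : ∑_v y_v = 0}` (e.g. a fundamental parallelepiped for
the Dirichlet unit lattice), then the set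
`F(1) = {x ∈ ∏_{v|∞}(K_v^{n+1} \ {0}) : pr(η(x)) ∈ F̃ and Ht_{w,∞}(x) ≤ 1}`
is a bounded subset of `K_∞^{n+1}`. -/
theorem fundamentalDomain_bounded {K : Type*} [Field K] [NumberField K] {n : ℕ}
    (w : Fin (n + 1) → ℕ) (hw : ∀ i, 0 < w i)
    (Ftil : Set (InfinitePlace K → ℝ))
    (hFtilH : ∀ y ∈ Ftil, ∑ v : InfinitePlace K, y v = 0)
    (hFtilBdd : Bornology.IsBounded Ftil) :
    Bornology.IsBounded
      {x : InfinitePlace K → Fin (n + 1) → ℂ |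
        (∀ v, x v ≠ 0) ∧ prMap K (etaMap w x) ∈ Ftil ∧ archHeight w x ≤ 1} :=
  fundamentalDomain_bounded_general w hw Ftil hFtilBdd
end
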